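/- Let (Ω, ℱ, P) be a probability space, (ℱ_t)_{t≥1} a filtration, ρ ∈ (0,1), A₃ ≥ 0, and let (Y_t)_{t≥1} be a sequence of nonnegative integrable adapted random variables and (b_t)_{t≥1} nonnegative random variables with b_t² integrable for each t. Suppose that for every t ≥ 1, E[Y_{t+1} ∣ ℱ_t] ≤ Y_t + A₃ Σ_{τ=1}^{t} ρ^{t−τ} (1/τ²) E[b_τ² ∣ ℱ_t] almost surely, and that Σ_{t=1}^∞ (1/t²) E[b_t²] < ∞. Then the sequence (Y_t) converges almost surely to a nonnegative random variable. -/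

import Mathlib

/-!
Robbins–Siegmund argument. With `e t` the right-hand error term, `Y n - ∑_{k<n} e k` is a
supermartingale; it is bounded in `L¹` because `Y ≥ 0` and `∑ E|e k| < ∞`, so Doob's theorem
makes it converge a.s. The series `∑ e k` converges absolutely a.s. since its expected absolute
sum is finite, hence `Y` converges a.s. as well. Finally `E|e t|` is dominated by the convolution
of the geometric sequence `ρ ^ k` with the summable sequence `t⁻² E[b t ²]`, which is summable.
-/

open MeasureTheory Filter Finset Topology

namespace MeasureTheory

section

variable {α E : Type*} {m0 : MeasurableSpace α} {μ : Measure α} [NormedAddCommGroup E]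

lemma ae_summable_norm_of_summable_integral_norm {ι : Type*} [Countable ι] {F : ι → α → E}
    (hF : ∀ i, Integrable (F i) μ) (h : Summable fun i => ∫ a, ‖F i a‖ ∂μ) :
    ∀ᵐ a ∂μ, Summable fun i => ‖F i a‖ := by
  refine summable_norm_of_tsum_eLpNorm_ne_top le_rfl (fun i => (hF i).1) ?_
  simp_rw [eLpNorm_one_eq_lintegral_enorm, ← ofReal_integral_norm_eq_lintegral_enorm (hF _)]
  rw [← ENNReal.ofReal_tsum_of_nonneg (fun i => integral_nonneg fun a => norm_nonneg _) h]
  exact ENNReal.ofReal_ne_top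

lemma integral_abs_sum_mul_condExp_le {ι : Type*} (m : MeasurableSpace α) (s : Finset ι)
    (c : ι → ℝ) (g : ι → α → ℝ) :
    ∫ a, |∑ i ∈ s, c i * μ[g i|m] a| ∂μ ≤ ∑ i ∈ s, |c i| * ∫ a, |g i a| ∂μ := by
  calc ∫ a, |∑ i ∈ s, c i * μ[g i|m] a| ∂μ
      ≤ ∫ a, ∑ i ∈ s, |c i| * |μ[g i|m] a| ∂μ := by
        refine integral_mono_of_nonneg (ae_of_all _ fun a => abs_nonneg _)
          (integrable_finsetSum _ fun i _ => integrable_condExp.abs.const_mul _)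
          (ae_of_all _ fun a => ?_)
        simpa only [abs_mul] using abs_sum_le_sum_abs (fun i => c i * μ[g i|m] a) s
    _ = ∑ i ∈ s, |c i| * ∫ a, |μ[g i|m] a| ∂μ := by
        rw [integral_finsetSum _ fun i _ => integrable_condExp.abs.const_mul _]
        simp_rw [integral_const_mul]
    _ ≤ ∑ i ∈ s, |c i| * ∫ a, |g i a| ∂μ :=
        sum_le_sum fun i _ =>
          mul_le_mul_of_nonneg_left (integral_abs_condExp_le _) (abs_nonneg _)

end

section

variable {Ω : Type*} {m0 : MeasurableSpace Ω} {μ : Measure Ω} [IsFiniteMeasure μ]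
  {ℱ : Filtration ℕ m0} {Y e : ℕ → Ω → ℝ}

lemma supermartingale_sub_sum_range (hY : StronglyAdapted ℱ Y)
    (hY_int : ∀ n, Integrable (Y n) μ) (he : StronglyAdapted ℱ e)
    (he_int : ∀ n, Integrable (e n) μ) (hle : ∀ n, μ[Y (n + 1)|ℱ n] ≤ᵐ[μ] Y n + e n) :
    Supermartingale (fun n => Y n - ∑ k ∈ range n, e k) ℱ μ := by
  have hS_meas : ∀ {n j}, j ≤ n + 1 → StronglyMeasurable[ℱ n] (∑ k ∈ range j, e k) :=
    fun hj => Finset.stronglyMeasurable_sum _ fun k hk => (he k).mono (ℱ.mono (by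
      have := mem_range.mp hk; omega))
  have hS_int : ∀ n, Integrable (∑ k ∈ range n, e k) μ := fun n =>
    integrable_finsetSum' _ fun k _ => he_int k
  refine supermartingale_nat (fun n => (hY n).sub (hS_meas n.le_succ))
    (fun n => (hY_int n).sub (hS_int n)) fun n => ?_
  filter_upwards [condExp_sub (hY_int (n + 1)) (hS_int (n + 1)) (ℱ n), hle n] with ω hsub hω
  rw [hsub, Pi.sub_apply,
    condExp_of_stronglyMeasurable (ℱ.le n) (hS_meas le_rfl) (hS_int (n + 1))]
  simp only [Pi.sub_apply, Finset.sum_apply, sum_range_succ, Pi.add_apply] at hω ⊢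
  linarith

lemma integral_abs_sub_sum_range_le (hY_nonneg : ∀ n, 0 ≤ᵐ[μ] Y n)
    (hY_int : ∀ n, Integrable (Y n) μ) (he_int : ∀ n, Integrable (e n) μ)
    (hsuper : Supermartingale (fun n => Y n - ∑ k ∈ range n, e k) ℱ μ) (n : ℕ) :
    ∫ ω, |Y n ω - ∑ k ∈ range n, e k ω| ∂μ
      ≤ ∫ ω, Y 0 ω ∂μ + 2 * ∑ k ∈ range n, ∫ ω, |e k ω| ∂μ := by
  have hS_int : Integrable (fun ω => ∑ k ∈ range n, e k ω) μ :=
    integrable_finsetSum _ fun k _ => he_int k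
  have hS_abs : ∫ ω, |∑ k ∈ range n, e k ω| ∂μ ≤ ∑ k ∈ range n, ∫ ω, |e k ω| ∂μ := by
    rw [← integral_finsetSum _ fun k _ => (he_int k).abs]
    exact integral_mono hS_int.abs (integrable_finsetSum _ fun k _ => (he_int k).abs)
      fun ω => abs_sum_le_sum_abs _ _
  have hS_le : ∫ ω, ∑ k ∈ range n, e k ω ∂μ ≤ ∫ ω, |∑ k ∈ range n, e k ω| ∂μ :=
    integral_mono hS_int hS_int.abs fun ω => le_abs_self _
  have hsuper_int : ∫ ω, (Y n ω - ∑ k ∈ range n, e k ω) ∂μ ≤ ∫ ω, Y 0 ω ∂μ := by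
    simpa [setIntegral_univ] using hsuper.setIntegral_le (Nat.zero_le n) MeasurableSet.univ
  rw [integral_sub (hY_int n) hS_int] at hsuper_int
  have htriangle : ∫ ω, |Y n ω - ∑ k ∈ range n, e k ω| ∂μ
      ≤ ∫ ω, Y n ω ∂μ + ∫ ω, |∑ k ∈ range n, e k ω| ∂μ := by
    rw [← integral_add (hY_int n) hS_int.abs]
    refine integral_mono_ae ((hY_int n).sub hS_int).abs ((hY_int n).add hS_int.abs) ?_
    filter_upwards [hY_nonneg n] with ω hω
    exact (abs_sub _ _).trans_eq (by rw [abs_of_nonneg hω])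
  linarith

theorem ae_exists_tendsto_of_condExp_le_add (hY : StronglyAdapted ℱ Y)
    (hY_nonneg : ∀ n, 0 ≤ᵐ[μ] Y n) (hY_int : ∀ n, Integrable (Y n) μ)
    (he : StronglyAdapted ℱ e) (he_int : ∀ n, Integrable (e n) μ)
    (he_sum : Summable fun n => ∫ ω, |e n ω| ∂μ)
    (hle : ∀ n, μ[Y (n + 1)|ℱ n] ≤ᵐ[μ] Y n + e n) :
    ∀ᵐ ω ∂μ, ∃ l, Tendsto (fun n => Y n ω) atTop (𝓝 l) := by
  set f : ℕ → Ω → ℝ := fun n => Y n - ∑ k ∈ range n, e k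
  have hsuper : Supermartingale f ℱ μ :=
    supermartingale_sub_sum_range hY hY_int he he_int hle
  have hbdd : ∀ n, eLpNorm ((-f) n) 1 μ
      ≤ (∫ ω, Y 0 ω ∂μ + 2 * ∑' n, ∫ ω, |e n ω| ∂μ).toNNReal := fun n => by
    have hf_int : Integrable (f n) μ := hsuper.integrable n
    rw [Pi.neg_apply, eLpNorm_neg, eLpNorm_one_eq_lintegral_enorm,
      ← ofReal_integral_norm_eq_lintegral_enorm hf_int]
    refine ENNReal.ofReal_le_ofReal ?_
    have hpartial :=
      he_sum.sum_le_tsum (range n) fun k _ => integral_nonneg fun ω => abs_nonneg _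
    simpa only [f, Pi.sub_apply, Finset.sum_apply, Real.norm_eq_abs] using
      (integral_abs_sub_sum_range_le hY_nonneg hY_int he_int hsuper n).trans (by linarith)
  have he_abs_sum : ∀ᵐ ω ∂μ, Summable fun n => ‖e n ω‖ :=
    ae_summable_norm_of_summable_integral_norm he_int
      (by simpa only [Real.norm_eq_abs] using he_sum)
  filter_upwards [hsuper.neg.exists_ae_tendsto_of_bdd hbdd, he_abs_sum] with ω ⟨c, hc⟩ hω
  refine ⟨(∑' n, e n ω) - c, (hω.of_norm.hasSum.tendsto_sum_nat.sub hc).congr fun n => ?_⟩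
  simp [f]

end

lemma exists_measurable_nonneg_limit_of_ae_tendsto {α : Type*} {m0 : MeasurableSpace α}
    {μ : Measure α} {Y : ℕ → α → ℝ} (hY : ∀ n, AEStronglyMeasurable (Y n) μ)
    (hY_nonneg : ∀ᵐ a ∂μ, ∀ n, 0 ≤ Y n a)
    (h : ∀ᵐ a ∂μ, ∃ l, Tendsto (fun n => Y n a) atTop (𝓝 l)) :
    ∃ Ylim : α → ℝ, Measurable Ylim ∧ (∀ a, 0 ≤ Ylim a) ∧
      ∀ᵐ a ∂μ, Tendsto (fun n => Y n a) atTop (𝓝 (Ylim a)) := by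
  obtain ⟨g, hg_meas, hg⟩ := exists_stronglyMeasurable_limit_of_tendsto_ae hY h
  refine ⟨fun a => max (g a) 0, hg_meas.measurable.max measurable_const,
    fun a => le_max_right _ _, ?_⟩
  filter_upwards [hg, hY_nonneg] with a ha ha0
  rwa [max_eq_left (ge_of_tendsto' ha ha0)]

def Filtration.shift {Ω : Type*} {m : MeasurableSpace Ω} (ℱ : Filtration ℕ m) (k : ℕ) :
    Filtration ℕ m :=
  ⟨fun n => ℱ (n + k), fun _ _ h => ℱ.mono (by omega), fun _ => ℱ.le _⟩

end MeasureTheory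

section CostIncrementBound

noncomputable def costIncrementBound {Ω : Type*} {m0 : MeasurableSpace Ω} (μ : Measure Ω)
    (ℱ : Filtration ℕ m0) (ρ A₃ : ℝ) (b : ℕ → Ω → ℝ) (t : ℕ) (ω : Ω) : ℝ :=
  A₃ * ∑ τ ∈ Icc 1 t, ρ ^ (t - τ) * (1 / (τ : ℝ) ^ 2) * (μ[fun ω' => (b τ ω') ^ 2|ℱ t]) ω

variable {Ω : Type*} {m0 : MeasurableSpace Ω} {μ : Measure Ω} {ℱ : Filtration ℕ m0}
  {ρ A₃ : ℝ} {b : ℕ → Ω → ℝ}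

lemma stronglyAdapted_costIncrementBound :
    StronglyAdapted ℱ (costIncrementBound μ ℱ ρ A₃ b) := fun _ =>
  (Finset.stronglyMeasurable_fun_sum _ fun _ _ =>
    stronglyMeasurable_condExp.const_mul _).const_mul _

lemma integrable_costIncrementBound (t : ℕ) : Integrable (costIncrementBound μ ℱ ρ A₃ b t) μ :=
  (integrable_finsetSum _ fun _ _ => integrable_condExp.const_mul _).const_mul _

lemma summable_integral_abs_costIncrementBound (hρ0 : 0 ≤ ρ) (hρ1 : ρ < 1)
    (hsum : Summable fun t : ℕ => (1 / (t : ℝ) ^ 2) * ∫ ω, (b t ω) ^ 2 ∂μ) :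
    Summable fun t => ∫ ω, |costIncrementBound μ ℱ ρ A₃ b t ω| ∂μ := by
  set a : ℕ → ℝ := fun t => (1 / (t : ℝ) ^ 2) * ∫ ω, (b t ω) ^ 2 ∂μ
  have ha_nonneg : ∀ t, 0 ≤ a t := fun t =>
    mul_nonneg (by positivity) (integral_nonneg fun ω => sq_nonneg _)
  have hconv : Summable fun t => |A₃| * ∑ τ ∈ range (t + 1), a τ * ρ ^ (t - τ) := by
    have hgeom := summable_geometric_of_lt_one hρ0 hρ1
    exact (summable_sum_mul_range_of_summable_norm' (f := a) (g := (ρ ^ ·))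
      (by simpa only [Real.norm_eq_abs] using hsum.abs) hsum
      (by simpa only [Real.norm_eq_abs] using hgeom.abs) hgeom).mul_left _
  refine hconv.of_nonneg_of_le (fun t => integral_nonneg fun ω => abs_nonneg _) fun t => ?_
  calc ∫ ω, |costIncrementBound μ ℱ ρ A₃ b t ω| ∂μ
      = |A₃| * ∫ ω, |∑ τ ∈ Icc 1 t, ρ ^ (t - τ) * (1 / (τ : ℝ) ^ 2) *
          (μ[fun ω' => (b τ ω') ^ 2|ℱ t]) ω| ∂μ := by
        simp only [costIncrementBound, abs_mul, integral_const_mul]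
    _ ≤ |A₃| * ∑ τ ∈ Icc 1 t, a τ * ρ ^ (t - τ) := by
        refine mul_le_mul_of_nonneg_left
          ((integral_abs_sum_mul_condExp_le _ _ _ _).trans_eq ?_) (abs_nonneg _)
        refine sum_congr rfl fun τ _ => ?_
        rw [abs_of_nonneg (by positivity : 0 ≤ ρ ^ (t - τ) * (1 / (τ : ℝ) ^ 2))]
        simp only [a, abs_pow, sq_abs]
        ring
    _ ≤ |A₃| * ∑ τ ∈ range (t + 1), a τ * ρ ^ (t - τ) := by
        refine mul_le_mul_of_nonneg_left (sum_le_sum_of_subset_of_nonneg ?_ fun τ _ _ =>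
          mul_nonneg (ha_nonneg τ) (pow_nonneg hρ0 _)) (abs_nonneg _)
        intro τ hτ
        simp only [mem_Icc, mem_range] at hτ ⊢
        omega

end CostIncrementBound

theorem cost_sequence_converges_general
    {Ω : Type*} {mΩ : MeasurableSpace Ω} (μ : Measure Ω) [IsProbabilityMeasure μ]
    (ℱ : Filtration ℕ mΩ)
    (ρ A₃ : ℝ) (hρ : ρ ∈ Set.Ioo (0 : ℝ) 1)
    (Y : ℕ → Ω → ℝ) (b : ℕ → Ω → ℝ)
    (hY_adapted : Adapted ℱ Y)
    (hY_nonneg : ∀ t ω, 0 ≤ Y t ω)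
    (hY_int : ∀ t, Integrable (Y t) μ)
    (hcond : ∀ t, 1 ≤ t → ∀ᵐ ω ∂μ, (μ[Y (t + 1)|ℱ t]) ω ≤ Y t ω +
      A₃ * ∑ τ ∈ Finset.Icc 1 t,
        ρ ^ (t - τ) * (1 / (τ : ℝ) ^ 2) * (μ[fun ω' => (b τ ω') ^ 2|ℱ t]) ω)
    (hsum : Summable fun t : ℕ => (1 / (t : ℝ) ^ 2) * ∫ ω, (b t ω) ^ 2 ∂μ) :
    ∃ Ylim : Ω → ℝ, Measurable Ylim ∧ (∀ ω, 0 ≤ Ylim ω) ∧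
      ∀ᵐ ω ∂μ, Tendsto (fun t => Y t ω) atTop (nhds (Ylim ω)) := by
  have he_sum : Summable fun n => ∫ ω, |costIncrementBound μ ℱ ρ A₃ b (n + 1) ω| ∂μ :=
    (summable_nat_add_iff 1).2 (summable_integral_abs_costIncrementBound hρ.1.le hρ.2 hsum)
  -- `hcond` only starts at `t = 1`, so the general result is applied to the shifted sequence.
  have hconv : ∀ᵐ ω ∂μ, ∃ l, Tendsto (fun n => Y (n + 1) ω) atTop (𝓝 l) :=
    ae_exists_tendsto_of_condExp_le_add (ℱ := ℱ.shift 1)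
      (fun n => (hY_adapted (n + 1)).stronglyMeasurable) (fun n => ae_of_all _ (hY_nonneg _))
      (fun n => hY_int _) (fun n => stronglyAdapted_costIncrementBound (n + 1))
      (fun n => integrable_costIncrementBound _) he_sum (fun n => hcond (n + 1) le_add_self)
  refine exists_measurable_nonneg_limit_of_ae_tendsto
    (fun n => ((hY_adapted n).mono (ℱ.le n) le_rfl).aestronglyMeasurable)
    (ae_of_all _ fun ω n => hY_nonneg n ω) ?_
  filter_upwards [hconv] with ω ⟨l, hl⟩
  exact ⟨l, (tendsto_add_atTop_iff_nat 1).1 hl⟩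

/-- Lemma 4.0 of the paper: if the nonnegative integrable adapted sequence `Y`
(the costs `J(𝒲^t)`) satisfies, for every `t ≥ 1`, the conditional inequality
`E[Y (t+1) ∣ ℱ t] ≤ Y t + A₃ ∑_{τ=1}^{t} ρ^(t-τ) (1/τ²) E[b τ ² ∣ ℱ t]` a.s.,
and `∑_t (1/t²) E[b t ²] < ∞`, then `Y t` converges almost surely to a
nonnegative random variable. -/
theorem cost_sequence_converges
    {Ω : Type*} {mΩ : MeasurableSpace Ω} (μ : Measure Ω) [IsProbabilityMeasure μ]
    (ℱ : Filtration ℕ mΩ)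
    (ρ A₃ : ℝ) (hρ : ρ ∈ Set.Ioo (0 : ℝ) 1) (hA₃ : 0 ≤ A₃)
    (Y : ℕ → Ω → ℝ) (b : ℕ → Ω → ℝ)
    (hY_adapted : Adapted ℱ Y)
    (hY_nonneg : ∀ t ω, 0 ≤ Y t ω)
    (hY_int : ∀ t, Integrable (Y t) μ)
    (hb_nonneg : ∀ t ω, 0 ≤ b t ω)
    (hb_sq_int : ∀ t, Integrable (fun ω => (b t ω) ^ 2) μ)
    (hcond : ∀ t, 1 ≤ t → ∀ᵐ ω ∂μ, (μ[Y (t + 1)|ℱ t]) ω ≤ Y t ω +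
      A₃ * ∑ τ ∈ Finset.Icc 1 t,
        ρ ^ (t - τ) * (1 / (τ : ℝ) ^ 2) * (μ[fun ω' => (b τ ω') ^ 2|ℱ t]) ω)
    (hsum : Summable fun t : ℕ => (1 / (t : ℝ) ^ 2) * ∫ ω, (b t ω) ^ 2 ∂μ) :
    ∃ Ylim : Ω → ℝ, Measurable Ylim ∧ (∀ ω, 0 ≤ Ylim ω) ∧
      ∀ᵐ ω ∂μ, Tendsto (fun t => Y t ω) atTop (nhds (Ylim ω)) :=
  cost_sequence_converges_general μ ℱ ρ A₃ hρ Y b hY_adapted hY_nonneg hY_int hcond hsum
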